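/- Let T1, T2, T_f be integer time-points with T1 ≺ T_f and T2 ≺ T_f, and let G = {'Protected holds-at T_f'}. Then Δ = {'InjectB happens-at T1', 'InjectE happens-at T2'} is a safe plan for G in the planning domain ⟨D_r, ∅⟩, where models are required to satisfy the r-proposition clause (5). -/
import Mathlib

/-- A fluent literal: a fluent constant or its negation. -/
inductive FluentLit (F : Type) where
  | pos (f : F)
  | neg (f : F)

/-- A domain description with ramifications: t-propositions `L holds-at T`,
h-propositions `A happens-at T`, c-propositions `A initiates/terminates F when C`,
and r-propositions `L whenever C`. -/
structure Domain (F A T : Type) where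
  tprops : Set (FluentLit F × T)
  hprops : Set (A × T)
  initiates : Set (A × F × Set (FluentLit F))
  terminates : Set (A × F × Set (FluentLit F))
  rprops : Set (FluentLit F × Set (FluentLit F))

variable {F A T : Type}

/-- An interpretation `H` satisfies a set `C` of fluent literals at time `t`. -/
def satisfiesAt (H : F → T → Bool) (C : Set (FluentLit F)) (t : T) : Prop :=
  (∀ f, FluentLit.pos f ∈ C → H f t = true) ∧
  (∀ f, FluentLit.neg f ∈ C → H f t = false)

/-- `t` is an initiation-point for `f` in `H` relative to `D`. -/
def InitPoint (D : Domain F A T) (H : F → T → Bool) (f : F) (t : T) : Prop :=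
  ∃ a C, (a, t) ∈ D.hprops ∧ (a, f, C) ∈ D.initiates ∧ satisfiesAt H C t

/-- `t` is a termination-point for `f` in `H` relative to `D`. -/
def TermPoint (D : Domain F A T) (H : F → T → Bool) (f : F) (t : T) : Prop :=
  ∃ a C, (a, t) ∈ D.hprops ∧ (a, f, C) ∈ D.terminates ∧ satisfiesAt H C t

/-- A fluent literal holds in an interpretation at a time-point. -/
def holdsLit (H : F → T → Bool) : FluentLit F → T → Prop
  | .pos f, t => H f t = true
  | .neg f, t => H f t = false

/-- `H` is a model of the domain description `D` (clauses (1)-(5)). -/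
def Model [LinearOrder T] (D : Domain F A T) (H : F → T → Bool) : Prop :=
  (∀ f (t1 t3 : T), t1 < t3 →
    (¬ ∃ t2, (InitPoint D H f t2 ∨ TermPoint D H f t2) ∧ t1 ≤ t2 ∧ t2 < t3) →
    H f t1 = H f t3) ∧
  (∀ f (t1 t3 : T), t1 < t3 → InitPoint D H f t1 →
    (¬ ∃ t2, TermPoint D H f t2 ∧ t1 < t2 ∧ t2 < t3) → H f t3 = true) ∧
  (∀ f (t1 t3 : T), t1 < t3 → TermPoint D H f t1 →
    (¬ ∃ t2, InitPoint D H f t2 ∧ t1 < t2 ∧ t2 < t3) → H f t3 = false) ∧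
  (∀ L t, (L, t) ∈ D.tprops → holdsLit H L t) ∧
  (∀ L C, (L, C) ∈ D.rprops → ∀ t : T, satisfiesAt H C t → holdsLit H L t)

/-- `D` is consistent iff it has a model. -/
def Consistent [LinearOrder T] (D : Domain F A T) : Prop := ∃ H, Model D H

/-- `D` entails the t-proposition `L holds-at t`. -/
def Entails [LinearOrder T] (D : Domain F A T) (L : FluentLit F) (t : T) : Prop :=
  ∀ H, Model D H → holdsLit H L t

/-- `D ∪ Δ` for a set `Δ` of h-propositions. -/
def addH (D : Domain F A T) (Δ : Set (A × T)) : Domain F A T :=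
  { D with hprops := D.hprops ∪ Δ }

/-- `D ⊨ P`: `D` satisfies the set `P` of p-propositions `A needs C`. -/
def SatisfiesP [LinearOrder T] (D : Domain F A T)
    (P : Set (A × Set (FluentLit F))) : Prop :=
  ∀ a C, (a, C) ∈ P → ∀ t : T, (a, t) ∈ D.hprops → ∀ L ∈ C, Entails D L t

/-- `Δ` is a safe plan for the goal `G` in the planning domain `⟨D,P⟩`. -/
def SafePlan [LinearOrder T] (D : Domain F A T) (P : Set (A × Set (FluentLit F)))
    (G : Set (FluentLit F × T)) (Δ : Set (A × T)) : Prop :=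
  Consistent (addH D Δ) ∧ (∀ L t, (L, t) ∈ G → Entails (addH D Δ) L t) ∧
  SatisfiesP (addH D Δ) P

/-- Fluent constants of the ramification domain. -/
inductive RFluent where
  | Protected
  | TypeO
  | Strong

/-- Action constants of the ramification domain. -/
inductive RAction where
  | InjectB
  | InjectE

/-- The ramification domain `D_r`: `InjectB initiates Protected when {¬TypeO}`,
`InjectE initiates Protected when {Strong}`, `Strong whenever {TypeO}`. -/
def Dr : Domain RFluent RAction ℤ where
  tprops := ∅
  hprops := ∅
  initiates := {(.InjectB, .Protected, {.neg .TypeO}),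
                (.InjectE, .Protected, {.pos .Strong})}
  terminates := ∅
  rprops := {(.pos .Strong, {.pos .TypeO})}

/-- for `T1 ≺ T_f` and `T2 ≺ T_f`,
`Δ = {InjectB happens-at T1, InjectE happens-at T2}` is a safe plan for
`G = {Protected holds-at T_f}` in `⟨D_r,∅⟩` (models satisfying clause (5)). -/
theorem injectB_injectE_safePlan_Dr (T1 T2 Tf : ℤ) (h1 : T1 < Tf) (h2 : T2 < Tf) :
    SafePlan Dr (∅ : Set (RAction × Set (FluentLit RFluent)))
      {(.pos .Protected, Tf)} {(.InjectB, T1), (.InjectE, T2)} := by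
  set D' := addH Dr {(.InjectB, T1), (.InjectE, T2)} with hD'
  -- no termination points at all
  have hterm : ∀ (H : RFluent → ℤ → Bool) f t, ¬ TermPoint D' H f t := by
    rintro H f t ⟨a, C, _, hmem, _⟩
    simp [hD', addH, Dr] at hmem
  -- no initiation points for TypeO
  have hTypeO : ∀ (H : RFluent → ℤ → Bool) t, ¬ InitPoint D' H .TypeO t := by
    rintro H t ⟨a, C, _, hmem, _⟩
    simp [hD', addH, Dr, Prod.ext_iff] at hmem
  refine ⟨⟨fun _ _ => true, ?_, ?_, ?_, ?_, ?_⟩, ?_, ?_⟩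
  · intro f t1 t3 _ _; rfl
  · intro f t1 t3 _ _ _; rfl
  · intro f t1 t3 _ htp _; exact absurd htp (hterm _ f t1)
  · intro L t hmem; simp [hD', addH, Dr] at hmem
  · intro L C hmem t _
    simp [hD', addH, Dr, Prod.ext_iff] at hmem
    rcases hmem with ⟨hl, _⟩
    subst hl; rfl
  · intro L t hmem H hM
    simp only [Set.mem_singleton_iff, Prod.ext_iff] at hmem
    obtain ⟨hl, ht⟩ := hmem
    subst hl; subst ht
    obtain ⟨m1, m2, _, _, m5⟩ := hM
    by_cases hto : H .TypeO T1 = false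
    · -- InjectB initiates Protected at T1
      have hinit : InitPoint D' H .Protected T1 := by
        refine ⟨.InjectB, {.neg .TypeO}, ?_, ?_, ?_, ?_⟩
        · simp [hD', addH, Dr]
        · simp [hD', addH, Dr]
        · intro f hf; simp [Set.mem_singleton_iff] at hf
        · intro f hf; simp [Set.mem_singleton_iff] at hf
          subst hf; exact hto
      have := m2 .Protected T1 _ h1 hinit (by rintro ⟨t2, ht2, _⟩; exact hterm H _ t2 ht2)
      simpa [holdsLit] using this
    · push_neg at hto
      have hto1 : H .TypeO T1 = true := by
        cases h : H .TypeO T1 with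
        | false => exact absurd h hto
        | true => rfl
      -- TypeO is constant: H TypeO T2 = true
      have hto2 : H .TypeO T2 = true := by
        rcases lt_trichotomy T1 T2 with hlt | heq | hgt
        · have := m1 .TypeO T1 T2 hlt (by
            rintro ⟨t2, ht2 | ht2, _⟩
            · exact hTypeO H t2 ht2
            · exact hterm H _ t2 ht2)
          rw [← this]; exact hto1
        · rw [← heq]; exact hto1
        · have := m1 .TypeO T2 T1 hgt (by
            rintro ⟨t2, ht2 | ht2, _⟩
            · exact hTypeO H t2 ht2
            · exact hterm H _ t2 ht2)
          rw [this]; exact hto1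
      -- r-proposition gives Strong at T2
      have hstrong : H .Strong T2 = true := by
        have := m5 (.pos .Strong) {.pos .TypeO} (by simp [hD', addH, Dr]) T2
          ⟨fun f hf => by simp [Set.mem_singleton_iff] at hf; subst hf; exact hto2,
           fun f hf => by simp [Set.mem_singleton_iff] at hf⟩
        simpa [holdsLit] using this
      have hinit : InitPoint D' H .Protected T2 := by
        refine ⟨.InjectE, {.pos .Strong}, ?_, ?_, ?_, ?_⟩
        · simp [hD', addH, Dr]
        · simp [hD', addH, Dr]
        · intro f hf; simp [Set.mem_singleton_iff] at hf; subst hf; exact hstrong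
        · intro f hf; simp [Set.mem_singleton_iff] at hf
      have := m2 .Protected T2 _ h2 hinit (by rintro ⟨t2, ht2, _⟩; exact hterm H _ t2 ht2)
      simpa [holdsLit] using this
  · intro a C hmem; simp at hmem
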